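/- arXiv:1611.06337 — 3 statements merged into one kernel-verified Lean document; each statement's English description precedes it below -/
import Mathlib

section
/- Let $a,b\in\mathcal W_1$, i.e. $\sum_k|a_k|<\infty$ and $\sum_k|k\,a_k|<\infty$ (and similarly for $b$). Then the matrix $E_c=-H(a^-)H(b^+)$ satisfying $T(a)T(b)=T(ab)+E_c$ lies in $\mathcal F$, with $\|E_c\|_{\mathcal F}\le\Big(\sum_{k\ge1}k|a_{-k}|\Big)\Big(\sum_{k\ge1}k|b_k|\Big)$. -/
/-!
Entrywise, `(T(a)T(b))_{ij} = ∑_{r ≥ 0} a_{r-i} b_{j-r}`, whereas `(ab)_{j-i}` is the same sum over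
all `r ∈ ℤ`; the terms with `r < 0` are exactly the entries of `H(a⁻)H(b⁺)`.

For the bound, put `A_r = ∑_i |a_{-(i+r+1)}|` and `B_r = ∑_j |b_{r+j+1}|`. Summing the entries of
`|H(a⁻)| |H(b⁺)|` over `i, j` gives `∑_r A_r B_r ≤ (∑_r A_r)(∑_r B_r)`, and `∑_r A_r = ∑_k k |a_{-k}|`
because `a_{-k}` occurs once for each of the `k` pairs `(i, r)` with `i + r + 1 = k`.
Working in `ℝ≥0∞` makes all rearrangements free of summability side conditions.
-/

noncomputable section

def FNorm (F : ℕ → ℕ → ℂ) : ℝ := ∑' p : ℕ × ℕ, ‖F p.1 p.2‖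

def MemF (F : ℕ → ℕ → ℂ) : Prop := Summable fun p : ℕ × ℕ => ‖F p.1 p.2‖

def matMul (E F : ℕ → ℕ → ℂ) : ℕ → ℕ → ℂ := fun i j => ∑' r : ℕ, E i r * F r j

def Toep (a : ℤ → ℂ) : ℕ → ℕ → ℂ := fun i j => a ((j : ℤ) - (i : ℤ))

/-- Hankel matrix of `a⁻`: entries `a_{-(i+j-1)}` (0-based indices). -/
def HankM (a : ℤ → ℂ) : ℕ → ℕ → ℂ := fun i j => a (-((i : ℤ) + (j : ℤ) + 1))

/-- Hankel matrix of `b⁺`: entries `b_{i+j-1}` (0-based indices). -/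
def HankP (b : ℤ → ℂ) : ℕ → ℕ → ℂ := fun i j => b ((i : ℤ) + (j : ℤ) + 1)

open scoped ENNReal

open Finset in
theorem ENNReal.tsum_prod_add_add_one (φ : ℕ → ℝ≥0∞) :
    ∑' p : ℕ × ℕ, φ (p.1 + p.2 + 1) = ∑' k : ℕ, (k : ℝ≥0∞) * φ k := by
  have antidiagonal_sum (n : ℕ) :
      ∑' x : antidiagonal n, φ ((x : ℕ × ℕ).1 + (x : ℕ × ℕ).2 + 1) = (n + 1 : ℝ≥0∞) * φ (n + 1) := by
    rw [tsum_subtype (antidiagonal n) fun x => φ (x.1 + x.2 + 1),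
      sum_congr rfl fun x hx => by rw [mem_antidiagonal.1 hx], sum_const, Nat.card_antidiagonal,
      nsmul_eq_mul]
    push_cast
    rfl
  rw [← HasAntidiagonal.sigmaAntidiagonalEquivProd.tsum_eq, ENNReal.tsum_sigma',
    tsum_eq_zero_add' ENNReal.summable (f := fun k : ℕ => (k : ℝ≥0∞) * φ k)]
  simp only [Nat.cast_zero, zero_mul, zero_add, Nat.cast_succ]
  exact tsum_congr antidiagonal_sum

theorem ENNReal.tsum_hankel_product_le (α β : ℕ → ℝ≥0∞) :
    ∑' p : ℕ × ℕ, ∑' r : ℕ, α (p.1 + r + 1) * β (r + p.2 + 1)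
      ≤ (∑' k : ℕ, (k : ℝ≥0∞) * α k) * ∑' k : ℕ, (k : ℝ≥0∞) * β k := by
  set A : ℕ → ℝ≥0∞ := fun r => ∑' i, α (i + r + 1)
  set B : ℕ → ℝ≥0∞ := fun r => ∑' j, β (r + j + 1)
  have sum_A : ∑' r, A r = ∑' k : ℕ, (k : ℝ≥0∞) * α k := by
    rw [ENNReal.tsum_comm, ← ENNReal.tsum_prod' (f := fun p : ℕ × ℕ => α (p.1 + p.2 + 1))]
    exact ENNReal.tsum_prod_add_add_one α
  have sum_B : ∑' r, B r = ∑' k : ℕ, (k : ℝ≥0∞) * β k := by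
    rw [← ENNReal.tsum_prod' (f := fun p : ℕ × ℕ => β (p.1 + p.2 + 1))]
    exact ENNReal.tsum_prod_add_add_one β
  calc ∑' p : ℕ × ℕ, ∑' r : ℕ, α (p.1 + r + 1) * β (r + p.2 + 1)
      = ∑' i, ∑' r, ∑' j, α (i + r + 1) * β (r + j + 1) := by
        rw [ENNReal.tsum_prod']
        exact tsum_congr fun i => ENNReal.tsum_comm
    _ = ∑' r, A r * B r := by
        rw [ENNReal.tsum_comm]
        simp_rw [A, B, ← ENNReal.tsum_mul_right, ← ENNReal.tsum_mul_left]
    _ ≤ ∑' r, A r * ∑' s, B s := by gcongr with r; exact ENNReal.le_tsum r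
    _ = _ := by rw [ENNReal.tsum_mul_right, sum_A, sum_B]

theorem tsum_enorm_matMul_hankM_hankP_le (a b : ℤ → ℂ) :
    ∑' p : ℕ × ℕ, ‖matMul (HankM a) (HankP b) p.1 p.2‖ₑ
      ≤ (∑' k : ℕ, (k : ℝ≥0∞) * ‖a (-(k : ℤ))‖ₑ) * ∑' k : ℕ, (k : ℝ≥0∞) * ‖b (k : ℤ)‖ₑ := by
  refine le_trans (ENNReal.tsum_le_tsum fun p => enorm_tsum_le_tsum_enorm.trans_eq ?_)
    (ENNReal.tsum_hankel_product_le (fun k => ‖a (-(k : ℤ))‖ₑ) fun k => ‖b (k : ℤ)‖ₑ)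
  refine tsum_congr fun r => ?_
  simp only [HankM, HankP, enorm_mul]
  push_cast
  rfl

theorem memF_and_fNorm_le_of_tsum_enorm_le {F : ℕ → ℕ → ℂ} {C : ℝ} (hC : 0 ≤ C)
    (h : ∑' p : ℕ × ℕ, ‖F p.1 p.2‖ₑ ≤ ENNReal.ofReal C) : MemF F ∧ FNorm F ≤ C := by
  have h_ne_top : ∑' p : ℕ × ℕ, ‖F p.1 p.2‖ₑ ≠ ∞ := ne_top_of_le_ne_top ENNReal.ofReal_ne_top h
  refine ⟨tsum_enorm_ne_top_iff_summable_norm.1 h_ne_top, ?_⟩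
  have hF : FNorm F = (∑' p : ℕ × ℕ, ‖F p.1 p.2‖ₑ).toReal := by
    rw [ENNReal.tsum_toReal_eq fun _ => enorm_ne_top]
    simp only [toReal_enorm, FNorm]
  exact hF ▸ ENNReal.toReal_le_of_le_ofReal hC h

theorem ofReal_tsum_natCast_mul_norm {E : Type*} [SeminormedAddGroup E] {f : ℕ → E}
    (hf : Summable fun k : ℕ => (k : ℝ) * ‖f k‖) :
    ENNReal.ofReal (∑' k : ℕ, (k : ℝ) * ‖f k‖) = ∑' k : ℕ, (k : ℝ≥0∞) * ‖f k‖ₑ := by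
  rw [ENNReal.ofReal_tsum_of_nonneg (fun k => by positivity) hf]
  refine tsum_congr fun k => ?_
  rw [ENNReal.ofReal_mul (Nat.cast_nonneg k), ENNReal.ofReal_natCast, ofReal_norm]

theorem summable_mul_sub_shift {a b : ℤ → ℂ} (ha : Summable fun k : ℤ => ‖a k‖)
    (hb : Summable fun k : ℤ => ‖b k‖) (s t : ℤ) :
    Summable fun r : ℤ => a (r - s) * b (t - r) := by
  have ha_shift : Summable fun r : ℤ => ‖a (r - s)‖ :=
    (Equiv.subRight s).summable_iff.2 ha
  refine .of_norm_bounded (ha_shift.mul_right (∑' k, ‖b k‖)) fun r => ?_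
  rw [norm_mul]
  exact mul_le_mul_of_nonneg_left (hb.le_tsum _ fun _ _ => norm_nonneg _) (norm_nonneg _)

theorem matMul_toep_add_matMul_hankM_hankP {a b c : ℤ → ℂ} (ha : Summable fun k : ℤ => ‖a k‖)
    (hb : Summable fun k : ℤ => ‖b k‖) (hc : ∀ k : ℤ, c k = ∑' m : ℤ, a m * b (k - m))
    (i j : ℕ) :
    matMul (Toep a) (Toep b) i j + matMul (HankM a) (HankP b) i j = Toep c i j := by
  have hf : Summable fun r : ℤ => a (r - i) * b (j - r) := summable_mul_sub_shift ha hb i j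
  have toep_c : Toep c i j = ∑' r : ℤ, a (r - i) * b (j - r) := by
    rw [Toep, hc, ← (Equiv.subRight (i : ℤ)).tsum_eq]
    refine tsum_congr fun r => ?_
    rw [Equiv.subRight_apply, sub_sub_sub_cancel_right]
  have neg_succ_injective : Function.Injective fun n : ℕ => -((n : ℤ) + 1) := fun m n h => by
    simpa using h
  rw [toep_c, tsum_of_nat_of_neg_add_one (f := fun r : ℤ => a (r - i) * b (j - r))
    (hf.comp_injective Nat.cast_injective) (hf.comp_injective neg_succ_injective)]
  refine congrArg (matMul (Toep a) (Toep b) i j + ·) (tsum_congr fun r => ?_)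
  simp only [HankM, HankP]
  congr 2 <;> ring

/-- For `a, b ∈ 𝒲₁`, the correction `E_c = -H(a⁻)H(b⁺)` with `T(a)T(b) = T(ab) + E_c`
belongs to `𝓕` and `‖E_c‖_𝓕 ≤ (∑_{k≥1} k|a_{-k}|)(∑_{k≥1} k|b_k|)`. -/
theorem stmt7 (a b : ℤ → ℂ)
    (ha : Summable fun k : ℤ => ‖a k‖)
    (ha1 : Summable fun k : ℤ => |(k : ℝ)| * ‖a k‖)
    (hb : Summable fun k : ℤ => ‖b k‖)
    (hb1 : Summable fun k : ℤ => |(k : ℝ)| * ‖b k‖)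
    (c : ℤ → ℂ) (hc : ∀ k : ℤ, c k = ∑' m : ℤ, a m * b (k - m)) :
    (∀ i j, matMul (Toep a) (Toep b) i j
      = Toep c i j + (-(matMul (HankM a) (HankP b) i j))) ∧
    MemF (fun i j => -(matMul (HankM a) (HankP b) i j)) ∧
    FNorm (fun i j => -(matMul (HankM a) (HankP b) i j))
      ≤ (∑' k : ℕ, (k : ℝ) * ‖a (-(k : ℤ))‖)
        * ∑' k : ℕ, (k : ℝ) * ‖b (k : ℤ)‖ := by
  have hA : Summable fun k : ℕ => (k : ℝ) * ‖a (-(k : ℤ))‖ :=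
    (ha1.comp_injective (neg_injective.comp Nat.cast_injective)).congr fun k => by simp
  have hB : Summable fun k : ℕ => (k : ℝ) * ‖b (k : ℤ)‖ :=
    (hb1.comp_injective Nat.cast_injective).congr fun k => by simp
  refine ⟨fun i j => ?_, memF_and_fNorm_le_of_tsum_enorm_le
    (mul_nonneg (tsum_nonneg fun k => by positivity) (tsum_nonneg fun k => by positivity)) ?_⟩
  · rw [← matMul_toep_add_matMul_hankM_hankP ha hb hc i j]
    ring
  · rw [ENNReal.ofReal_mul (tsum_nonneg fun k => by positivity), ofReal_tsum_natCast_mul_norm hA,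
      ofReal_tsum_natCast_mul_norm hB]
    simpa only [enorm_neg] using tsum_enorm_matMul_hankM_hankP_le a b

end
end

section
/- Let $A=T(a)+E_a$ and $B=T(b)+E_b$ be CQT matrices, i.e. $a,b\in\mathcal W_1$ and $E_a,E_b\in\mathcal F$. Then $AB=T(ab)+E_c$ where $E_c=-H(a^-)H(b^+)+T(a)E_b+E_aT(b)+E_aE_b\in\mathcal F$ and $\|E_c\|_{\mathcal F}\le \|(a^-)'\|_{\mathcal W}\|(b^+)'\|_{\mathcal W}+\|a\|_{\mathcal W}\|E_b\|_{\mathcal F}+\|b\|_{\mathcal W}\|E_a\|_{\mathcal F}+\|E_a\|_{\mathcal F}\|E_b\|_{\mathcal F}$. -/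
noncomputable section

def WNorm (a : ℤ → ℂ) : ℝ := ∑' k : ℤ, ‖a k‖

/-!
Each of the four terms of `E_c` is a product `X Y` whose triple series
`∑_{i,j,r} |X i r| |Y r j|` is dominated, along an injective reindexing `(i, j, r) ↦ (x, y)`, by
a product `f x * g y` of two absolutely convergent series; this gives membership in `𝓕` and the
norm bound at once. For the Hankel term these series are the entries of `H(a⁻)` and `H(b⁺)`,
and `‖H(a⁻)‖_𝓕 = ∑ k |a_{-k}|` because the antidiagonal `i + j + 1 = k` has `k` entries.
The identity `AB = T(ab) + E_c` comes from `T(a) T(b) = T(ab) - H(a⁻) H(b⁺)`, the splitting of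
the convolution `(ab)_{j-i} = ∑_{s ∈ ℤ} a_{s-i} b_{j-s}` into the terms `s ≥ 0` and `s < 0`.
-/

open Finset in
theorem hasSum_prod_comp_add_add_one {φ : ℕ → ℝ} (h0 : ∀ k, 0 ≤ φ k)
    (h : Summable fun k : ℕ => k * φ k) :
    HasSum (fun p : ℕ × ℕ => φ (p.1 + p.2 + 1)) (∑' k : ℕ, k * φ k) := by
  have hfiber : ∀ n : ℕ, HasSum (fun p : antidiagonal n => φ (p.1.1 + p.1.2 + 1))
      ((n + 1 : ℕ) * φ (n + 1)) := by
    intro n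
    convert hasSum_fintype (fun p : antidiagonal n => φ (p.1.1 + p.1.2 + 1)) using 1
    rw [Finset.sum_congr rfl fun p _ => by rw [mem_antidiagonal.mp p.2]]
    simp
  have hshift : HasSum (fun n : ℕ => ((n + 1 : ℕ) : ℝ) * φ (n + 1)) (∑' k : ℕ, k * φ k) := by
    simpa using (hasSum_nat_add_iff' 1).mpr h.hasSum
  rw [← HasAntidiagonal.sigmaAntidiagonalEquivProd.hasSum_iff]
  refine hshift.sigma_of_hasSum hfiber ?_
  exact (summable_sigma_of_nonneg fun _ => h0 _).mpr
    ⟨fun n => (hfiber n).summable, hshift.summable.congr fun n => ((hfiber n).tsum_eq).symm⟩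

section MemF

variable {X Y : ℕ → ℕ → ℂ}

theorem MemF.add (hX : MemF X) (hY : MemF Y) : MemF (X + Y) :=
  Summable.of_nonneg_of_le (fun _ => norm_nonneg _) (fun _ => norm_add_le _ _)
    (Summable.add hX hY)

theorem MemF.neg (hX : MemF X) : MemF (-X) := by
  simpa only [MemF, Pi.neg_apply, norm_neg] using hX

theorem fNorm_neg (X : ℕ → ℕ → ℂ) : FNorm (-X) = FNorm X := by
  simp only [FNorm, Pi.neg_apply, norm_neg]

theorem fNorm_add_le (hX : MemF X) (hY : MemF Y) : FNorm (X + Y) ≤ FNorm X + FNorm Y :=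
  (Summable.tsum_le_tsum (fun _ => norm_add_le _ _) (hX.add hY) (Summable.add hX hY)).trans_eq
    (Summable.tsum_add hX hY)

theorem fNorm_add_add_add_le {X₁ X₂ X₃ X₄ : ℕ → ℕ → ℂ} (h₁ : MemF X₁) (h₂ : MemF X₂)
    (h₃ : MemF X₃) (h₄ : MemF X₄) :
    FNorm (X₁ + X₂ + X₃ + X₄) ≤ FNorm X₁ + FNorm X₂ + FNorm X₃ + FNorm X₄ := by
  refine (fNorm_add_le ((h₁.add h₂).add h₃) h₄).trans ?_
  gcongr
  refine (fNorm_add_le (h₁.add h₂) h₃).trans ?_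
  gcongr
  exact fNorm_add_le h₁ h₂

end MemF

def AbsSummableMul (X Y : ℕ → ℕ → ℂ) : Prop :=
  Summable fun q : (ℕ × ℕ) × ℕ => ‖X q.1.1 q.2‖ * ‖Y q.2 q.1.2‖

namespace AbsSummableMul

variable {X Y : ℕ → ℕ → ℂ}

theorem summable_apply (h : AbsSummableMul X Y) (i j : ℕ) :
    Summable fun r => X i r * Y r j :=
  .of_norm <| (h.prod_factor (i, j)).congr fun _ => (norm_mul _ _).symm

theorem norm_matMul_apply_le (h : AbsSummableMul X Y) (i j : ℕ) :
    ‖matMul X Y i j‖ ≤ ∑' r, ‖X i r‖ * ‖Y r j‖ := by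
  simpa only [matMul, norm_mul] using norm_tsum_le_tsum_norm (h.summable_apply i j).norm

theorem memF (h : AbsSummableMul X Y) : MemF (matMul X Y) :=
  Summable.of_nonneg_of_le (fun _ => norm_nonneg _) (fun p => h.norm_matMul_apply_le p.1 p.2)
    ((summable_prod_of_nonneg fun _ => by positivity).mp h).2

theorem fNorm_matMul_le (h : AbsSummableMul X Y) :
    FNorm (matMul X Y) ≤ ∑' q : (ℕ × ℕ) × ℕ, ‖X q.1.1 q.2‖ * ‖Y q.2 q.1.2‖ := by
  rw [h.tsum_prod' h.prod_factor]
  exact Summable.tsum_le_tsum (fun p => h.norm_matMul_apply_le p.1 p.2)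
    h.memF ((summable_prod_of_nonneg fun _ => by positivity).mp h).2

end AbsSummableMul

section Domination

variable {X Y : ℕ → ℕ → ℂ}

theorem absSummableMul_and_fNorm_le_of_injective {α β : Type*} {f : α → ℝ} {g : β → ℝ}
    (hf : Summable f) (hg : Summable g) (hf0 : ∀ x, 0 ≤ f x) (hg0 : ∀ y, 0 ≤ g y)
    (ψ : (ℕ × ℕ) × ℕ → α × β) (hψ : Function.Injective ψ)
    (hle : ∀ q : (ℕ × ℕ) × ℕ, ‖X q.1.1 q.2‖ * ‖Y q.2 q.1.2‖ ≤ f (ψ q).1 * g (ψ q).2) :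
    AbsSummableMul X Y ∧ FNorm (matMul X Y) ≤ (∑' x, f x) * ∑' y, g y := by
  have hfg : Summable fun p : α × β => f p.1 * g p.2 := hf.mul_of_nonneg hg hf0 hg0
  have hfgψ : Summable ((fun p : α × β => f p.1 * g p.2) ∘ ψ) := hfg.comp_injective hψ
  have h : AbsSummableMul X Y := Summable.of_nonneg_of_le (fun _ => by positivity) hle hfgψ
  refine ⟨h, h.fNorm_matMul_le.trans ?_⟩
  rw [hf.tsum_mul_tsum hg hfg]
  exact Summable.tsum_le_tsum_of_inj ψ hψ (fun _ _ => mul_nonneg (hf0 _) (hg0 _)) hle h hfg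

theorem MemF.absSummableMul_and_fNorm_le (hX : MemF X) (hY : MemF Y) :
    AbsSummableMul X Y ∧ FNorm (matMul X Y) ≤ FNorm X * FNorm Y :=
  absSummableMul_and_fNorm_le_of_injective hX hY (fun _ => norm_nonneg _)
    (fun _ => norm_nonneg _) (fun q => ((q.1.1, q.2), (q.2, q.1.2)))
    (by rintro ⟨⟨i, j⟩, r⟩ ⟨⟨i', j'⟩, r'⟩ h; simp_all) (fun _ => le_rfl)

theorem absSummableMul_toep_left_and_fNorm_le {a : ℤ → ℂ}
    (ha : Summable fun k => ‖a k‖) (hY : MemF Y) :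
    AbsSummableMul (Toep a) Y ∧ FNorm (matMul (Toep a) Y) ≤ WNorm a * FNorm Y :=
  absSummableMul_and_fNorm_le_of_injective ha hY (fun _ => norm_nonneg _)
    (fun _ => norm_nonneg _) (fun q => ((q.2 : ℤ) - q.1.1, (q.2, q.1.2)))
    (by rintro ⟨⟨i, j⟩, r⟩ ⟨⟨i', j'⟩, r'⟩ h; simp only [Prod.mk.injEq] at h ⊢; omega)
    (fun _ => le_rfl)

theorem absSummableMul_toep_right_and_fNorm_le {b : ℤ → ℂ}
    (hX : MemF X) (hb : Summable fun k => ‖b k‖) :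
    AbsSummableMul X (Toep b) ∧ FNorm (matMul X (Toep b)) ≤ FNorm X * WNorm b :=
  absSummableMul_and_fNorm_le_of_injective hX hb (fun _ => norm_nonneg _)
    (fun _ => norm_nonneg _) (fun q => ((q.1.1, q.2), (q.1.2 : ℤ) - q.2))
    (by rintro ⟨⟨i, j⟩, r⟩ ⟨⟨i', j'⟩, r'⟩ h; simp only [Prod.mk.injEq] at h ⊢; omega)
    (fun _ => le_rfl)

end Domination

section Toeplitz

variable {a b : ℤ → ℂ}

theorem hasSum_norm_hankM (ha1 : Summable fun k : ℤ => |(k : ℝ)| * ‖a k‖) :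
    HasSum (fun p : ℕ × ℕ => ‖HankM a p.1 p.2‖) (∑' k : ℕ, (k : ℝ) * ‖a (-(k : ℤ))‖) := by
  have h := (summable_int_iff_summable_nat_and_neg.mp ha1).2
  convert hasSum_prod_comp_add_add_one (φ := fun k : ℕ => ‖a (-(k : ℤ))‖)
    (fun _ => norm_nonneg _) (h.congr fun k => by simp) using 2 with p
  simp only [HankM]
  push_cast
  ring_nf

theorem hasSum_norm_hankP (hb1 : Summable fun k : ℤ => |(k : ℝ)| * ‖b k‖) :
    HasSum (fun p : ℕ × ℕ => ‖HankP b p.1 p.2‖) (∑' k : ℕ, (k : ℝ) * ‖b (k : ℤ)‖) := by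
  have h := (summable_int_iff_summable_nat_and_neg.mp hb1).1
  convert hasSum_prod_comp_add_add_one (φ := fun k : ℕ => ‖b (k : ℤ)‖)
    (fun _ => norm_nonneg _) (h.congr fun k => by simp) using 2 with p
  simp only [HankP]
  push_cast
  ring_nf

theorem summable_mul_comp_sub (ha : Summable fun k => ‖a k‖) (hb : Summable fun k => ‖b k‖)
    (m n : ℤ) : Summable fun s : ℤ => a (s - m) * b (n - s) := by
  have hb' : Summable fun s : ℤ => ‖b (n - s)‖ := hb.comp_injective sub_right_injective
  refine Summable.of_norm_bounded (hb'.mul_left (WNorm a)) fun s => ?_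
  rw [norm_mul]
  gcongr
  exact ha.le_tsum _ fun _ _ => norm_nonneg _

theorem summable_toep_mul_toep_apply (ha : Summable fun k => ‖a k‖)
    (hb : Summable fun k => ‖b k‖) (i j : ℕ) : Summable fun r => Toep a i r * Toep b r j :=
  (summable_mul_comp_sub ha hb i j).comp_injective Nat.cast_injective

theorem toep_convolution_apply (ha : Summable fun k => ‖a k‖) (hb : Summable fun k => ‖b k‖)
    (i j : ℕ) :
    Toep (fun k => ∑' m, a m * b (k - m)) i j
      = matMul (Toep a) (Toep b) i j + matMul (HankM a) (HankP b) i j := by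
  have hs := summable_mul_comp_sub ha hb i j
  have hneg : Summable fun n : ℕ => a (-((n : ℤ) + 1) - i) * b (j - -((n : ℤ) + 1)) :=
    hs.comp_injective (i := fun n : ℕ => -((n : ℤ) + 1)) fun x y h => by simpa using h
  calc Toep (fun k => ∑' m, a m * b (k - m)) i j = ∑' s : ℤ, a (s - i) * b (j - s) := by
        rw [Toep, ← (Equiv.subRight (i : ℤ)).tsum_eq]
        simp only [Equiv.subRight_apply, sub_sub_sub_cancel_right]
    _ = _ := by
        rw [tsum_of_nat_of_neg_add_one (f := fun s : ℤ => a (s - i) * b (j - s))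
          (summable_toep_mul_toep_apply ha hb i j) hneg]
        congr 2 with n
        simp only [HankM, HankP]
        ring_nf

end Toeplitz

theorem matMul_add_add_apply {X X' Y Y' : ℕ → ℕ → ℂ} {i j : ℕ}
    (h₁ : Summable fun r => X i r * Y r j) (h₂ : Summable fun r => X i r * Y' r j)
    (h₃ : Summable fun r => X' i r * Y r j) (h₄ : Summable fun r => X' i r * Y' r j) :
    matMul (X + X') (Y + Y') i j
      = matMul X Y i j + matMul X Y' i j + matMul X' Y i j + matMul X' Y' i j := by
  simp only [matMul, Pi.add_apply, add_mul, mul_add]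
  rw [(h₁.add h₃).tsum_add (h₂.add h₄), h₁.tsum_add h₃, h₂.tsum_add h₄]
  ring

/-- Product of CQT matrices: `A = T(a)+E_a`, `B = T(b)+E_b` with `a, b ∈ 𝒲₁`,
`E_a, E_b ∈ 𝓕`; then `AB = T(ab) + E_c` where
`E_c = -H(a⁻)H(b⁺) + T(a)E_b + E_a T(b) + E_a E_b ∈ 𝓕` and
`‖E_c‖_𝓕 ≤ ‖(a⁻)'‖_W ‖(b⁺)'‖_W + ‖a‖_W ‖E_b‖_𝓕 + ‖b‖_W ‖E_a‖_𝓕 + ‖E_a‖_𝓕 ‖E_b‖_𝓕`. -/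
theorem stmt12 (a b : ℤ → ℂ) (Ea Eb : ℕ → ℕ → ℂ)
    (ha : Summable fun k : ℤ => ‖a k‖)
    (ha1 : Summable fun k : ℤ => |(k : ℝ)| * ‖a k‖)
    (hb : Summable fun k : ℤ => ‖b k‖)
    (hb1 : Summable fun k : ℤ => |(k : ℝ)| * ‖b k‖)
    (hEa : MemF Ea) (hEb : MemF Eb)
    (c : ℤ → ℂ) (hc : ∀ k : ℤ, c k = ∑' m : ℤ, a m * b (k - m)) :
    let A : ℕ → ℕ → ℂ := fun i j => Toep a i j + Ea i j
    let B : ℕ → ℕ → ℂ := fun i j => Toep b i j + Eb i j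
    let Ec : ℕ → ℕ → ℂ := fun i j =>
      -(matMul (HankM a) (HankP b) i j) + matMul (Toep a) Eb i j
        + matMul Ea (Toep b) i j + matMul Ea Eb i j
    MemF Ec ∧
    (∀ i j, matMul A B i j = Toep c i j + Ec i j) ∧
    FNorm Ec ≤ (∑' k : ℕ, (k : ℝ) * ‖a (-(k : ℤ))‖)
        * (∑' k : ℕ, (k : ℝ) * ‖b (k : ℤ)‖)
      + WNorm a * FNorm Eb + WNorm b * FNorm Ea + FNorm Ea * FNorm Eb := by
  intro A B Ec
  have hHa := hasSum_norm_hankM ha1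
  have hHb := hasSum_norm_hankP hb1
  obtain ⟨hHH, hHHle⟩ := MemF.absSummableMul_and_fNorm_le hHa.summable hHb.summable
  obtain ⟨hTE, hTEle⟩ := absSummableMul_toep_left_and_fNorm_le ha hEb
  obtain ⟨hET, hETle⟩ := absSummableMul_toep_right_and_fNorm_le hEa hb
  obtain ⟨hEE, hEEle⟩ := MemF.absSummableMul_and_fNorm_le hEa hEb
  have hEc : Ec = -matMul (HankM a) (HankP b) + matMul (Toep a) Eb + matMul Ea (Toep b)
      + matMul Ea Eb := rfl
  refine ⟨?_, fun i j => ?_, ?_⟩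
  · rw [hEc]
    exact ((hHH.memF.neg.add hTE.memF).add hET.memF).add hEE.memF
  · rw [show matMul A B i j = matMul (Toep a + Ea) (Toep b + Eb) i j from rfl,
      matMul_add_add_apply (summable_toep_mul_toep_apply ha hb i j) (hTE.summable_apply i j)
        (hET.summable_apply i j) (hEE.summable_apply i j),
      funext hc, toep_convolution_apply ha hb, hEc]
    simp only [Pi.add_apply, Pi.neg_apply]
    ring
  · rw [hEc]
    refine (fNorm_add_add_add_le hHH.memF.neg hTE.memF hET.memF hEE.memF).trans ?_
    rw [fNorm_neg]
    rw [show FNorm (HankM a) = _ from hHa.tsum_eq, show FNorm (HankP b) = _ from hHb.tsum_eq]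
      at hHHle
    linarith

end
end

section
/- Let $a_i(z)=a_{i,-1}z^{-1}+a_{i,0}+a_{i,1}z$ for $i=-1,0,1$ be Laurent polynomials with real coefficients satisfying: $\sum_{i,j=-1}^1 a_{i,j}=0$; $a_{0,0}<0$; $a_{i,j}\ge0$ for all $(i,j)\ne(0,0)$; (i) $a_{-1,0}>0$ or $a_{1,0}>0$; (ii) $a_{i,j}\ne0$ for at least one pair $(i,j)$ with $j\ne0$. Then for every $z$ on the unit circle with $z\ne1$, the quadratic polynomial $p_z(x)=a_1(z)x^2+a_0(z)x+a_{-1}(z)$ has exactly one root of modulus less than 1 and one root of modulus greater than 1 (in particular no root of modulus 1). -/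
/-!
For `‖x‖ = 1` one has `x⁻¹ p_z(x) = ∑ a_{i,j} xⁱ zʲ`, a combination with nonnegative weights
(except `a_{0,0}`) of points of the unit circle whose weights sum to zero; its real part can vanish
only if `xⁱ zʲ = 1` whenever `a_{i,j} > 0`, which conditions (i) and (ii) rule out for `z ≠ 1`.
So `p_z` has no root on the unit circle. Moreover `‖a₁(z)‖ + ‖a₋₁(z)‖ ≤ -Re a₀(z) ≤ ‖a₀(z)‖`, and
for a quadratic `a x² + b x + c` with roots `r, s` Vieta's formulas turn `‖a‖ + ‖c‖ ≤ ‖b‖` into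
`(1 - ‖r‖)(1 - ‖s‖) ≤ 0`: exactly one root lies inside the disk.
-/

noncomputable section

open Polynomial

theorem Complex.eq_one_of_norm_eq_one_of_re_eq_one {w : ℂ} (hw : ‖w‖ = 1) (hre : w.re = 1) :
    w = 1 :=
  Complex.ext hre (Complex.abs_re_eq_norm.1 (by rw [hre, hw, abs_one]))

theorem Complex.inv_re_of_norm_eq_one {w : ℂ} (hw : ‖w‖ = 1) : w⁻¹.re = w.re := by
  rw [Complex.inv_eq_conj hw, Complex.conj_re]

theorem card_filter_norm_lt_one_pair {r s : ℂ} (hr : ‖r‖ ≠ 1) (hs : ‖s‖ ≠ 1)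
    (hrs : (1 - ‖r‖) * (1 - ‖s‖) ≤ 0) :
    Multiset.card (({r, s} : Multiset ℂ).filter fun x => ‖x‖ < 1) = 1 := by
  rcases hr.lt_or_gt with hr | hr <;> rcases hs.lt_or_gt with hs | hs
  · nlinarith
  · simp [hr, hs.le]
  · simp [hr.le, Multiset.filter_singleton, hs]
  · nlinarith

theorem card_roots_filter_norm_lt_one_of_linear {b c : ℂ} (hb : b ≠ 0) (hcb : ‖c‖ ≤ ‖b‖)
    (hcirc : ∀ x, (C b * X + C c).IsRoot x → ‖x‖ ≠ 1) :
    Multiset.card ((C b * X + C c).roots.filter fun x => ‖x‖ < 1) = 1 := by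
  have hroot : (C b * X + C c).IsRoot (-(b⁻¹ * c)) := by
    simp [field]
  have hle : ‖-(b⁻¹ * c)‖ ≤ 1 := by
    rw [norm_neg, norm_mul, norm_inv, inv_mul_le_one₀ (norm_pos_iff.2 hb)]
    exact hcb
  rw [roots_C_mul_X_add_C c hb, Multiset.filter_singleton,
    if_pos (hle.lt_of_ne (hcirc _ hroot)), Multiset.card_singleton]

theorem card_roots_filter_norm_lt_one_of_norm_add_le {a b c : ℂ} (habc : ‖a‖ + ‖c‖ ≤ ‖b‖)
    (hcirc : ∀ x, (C a * X ^ 2 + C b * X + C c).IsRoot x → ‖x‖ ≠ 1) :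
    Multiset.card ((C a * X ^ 2 + C b * X + C c).roots.filter fun x => ‖x‖ < 1) = 1 := by
  rcases eq_or_ne a 0 with rfl | ha
  · have hb : b ≠ 0 := by
      rintro rfl
      have hc : c = 0 := norm_eq_zero.1 (by linarith [norm_nonneg c])
      exact hcirc 1 (by simp [hc]) norm_one
    simp only [map_zero, zero_mul, zero_add] at hcirc ⊢
    exact card_roots_filter_norm_lt_one_of_linear hb (by simpa using habc) hcirc
  · obtain ⟨r, s, hroots⟩ : ∃ r s, (C a * X ^ 2 + C b * X + C c).roots = {r, s} := by
      apply Multiset.card_eq_two.1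
      rw [IsAlgClosed.card_roots_eq_natDegree, natDegree_quadratic ha]
    have hmem : ∀ x ∈ ({r, s} : Multiset ℂ), ‖x‖ ≠ 1 := fun x hx =>
      hcirc x (isRoot_of_mem_roots (hroots ▸ hx))
    obtain ⟨hb, hc⟩ := (roots_quadratic_eq_pair_iff_of_ne_zero ha).1 hroots
    have hpos : 0 < ‖a‖ := norm_pos_iff.2 ha
    have : ‖a‖ * (1 + ‖r‖ * ‖s‖) ≤ ‖a‖ * (‖r‖ + ‖s‖) := calc
      ‖a‖ * (1 + ‖r‖ * ‖s‖) = ‖a‖ + ‖c‖ := by rw [hc]; simp only [norm_mul]; ring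
      _ ≤ ‖b‖ := habc
      _ = ‖a‖ * ‖r + s‖ := by rw [hb, norm_mul, norm_neg]
      _ ≤ ‖a‖ * (‖r‖ + ‖s‖) := by gcongr; exact norm_add_le r s
    rw [hroots]
    exact card_filter_norm_lt_one_pair (hmem r (by simp)) (hmem s (by simp))
      (by nlinarith [le_of_mul_le_mul_left this hpos])

def laurentTrinomial (a b c : ℝ) (z : ℂ) : ℂ := a * z⁻¹ + b + c * z

section laurentTrinomial

variable {a b c : ℝ} {z : ℂ}

theorem norm_laurentTrinomial_le (ha : 0 ≤ a) (hb : 0 ≤ b) (hc : 0 ≤ c) (hz : ‖z‖ = 1) :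
    ‖laurentTrinomial a b c z‖ ≤ a + b + c := calc
  ‖laurentTrinomial a b c z‖ ≤ ‖(a : ℂ) * z⁻¹‖ + ‖(b : ℂ)‖ + ‖(c : ℂ) * z‖ :=
    norm_add₃_le
  _ = a + b + c := by
    simp [hz, abs_of_nonneg ha, abs_of_nonneg hb, abs_of_nonneg hc]

theorem re_laurentTrinomial (hz : ‖z‖ = 1) :
    (laurentTrinomial a b c z).re = b + (a + c) * z.re := by
  simp [laurentTrinomial, Complex.inv_re_of_norm_eq_one hz]
  ring

end laurentTrinomial

theorem eq_one_of_laurentTrinomial_quadratic_eq_zero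
    {am1m1 am10 am11 a0m1 a00 a01 a1m1 a10 a11 : ℝ}
    (hsum : am1m1 + am10 + am11 + a0m1 + a00 + a01 + a1m1 + a10 + a11 = 0)
    (hpos : 0 ≤ am1m1 ∧ 0 ≤ am10 ∧ 0 ≤ am11 ∧ 0 ≤ a0m1 ∧ 0 ≤ a01 ∧
      0 ≤ a1m1 ∧ 0 ≤ a10 ∧ 0 ≤ a11)
    (hi : 0 < am10 ∨ 0 < a10) {z x : ℂ} (hz : ‖z‖ = 1) (hx : ‖x‖ = 1)
    (hroot : laurentTrinomial a1m1 a10 a11 z * x ^ 2 + laurentTrinomial a0m1 a00 a01 z * x +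
      laurentTrinomial am1m1 am10 am11 z = 0) :
    x = 1 := by
  obtain ⟨hm1m1, hm10, hm11, h0m1, h01, h1m1, h10, h11⟩ := hpos
  have hx0 : x ≠ 0 := norm_ne_zero_iff.1 (by rw [hx]; exact one_ne_zero)
  have hexpand : x⁻¹ * (laurentTrinomial a1m1 a10 a11 z * x ^ 2 +
      laurentTrinomial a0m1 a00 a01 z * x + laurentTrinomial am1m1 am10 am11 z) =
      am1m1 * (x⁻¹ * z⁻¹) + am10 * x⁻¹ + am11 * (x⁻¹ * z) + a0m1 * z⁻¹ + a00 + a01 * z +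
      a1m1 * (x * z⁻¹) + a10 * x + a11 * (x * z) := by
    simp only [laurentTrinomial]
    field_simp
    ring
  have hre := congrArg Complex.re hexpand
  rw [hroot, mul_zero] at hre
  simp only [Complex.add_re, Complex.re_ofReal_mul, Complex.ofReal_re, Complex.zero_re,
    Complex.inv_re_of_norm_eq_one hx] at hre
  have hterm : ∀ {a : ℝ} {w : ℂ}, 0 ≤ a → ‖w‖ = 1 → 0 ≤ a * (1 - w.re) := fun ha hw =>
    mul_nonneg ha (sub_nonneg.2 (hw ▸ Complex.re_le_norm _))
  have hxre : (am10 + a10) * (1 - x.re) = 0 := by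
    linarith [hterm hm1m1 (w := x⁻¹ * z⁻¹) (by simp [hx, hz]), hterm hm10 hx,
      hterm hm11 (w := x⁻¹ * z) (by simp [hx, hz]), hterm h0m1 (w := z⁻¹) (by simp [hz]),
      hterm h01 hz, hterm h1m1 (w := x * z⁻¹) (by simp [hx, hz]), hterm h10 hx,
      hterm h11 (w := x * z) (by simp [hx, hz])]
  have hcoef : 0 < am10 + a10 := by rcases hi with h | h <;> linarith
  refine Complex.eq_one_of_norm_eq_one_of_re_eq_one hx ?_
  linarith [(mul_eq_zero.1 hxre).resolve_left hcoef.ne']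

theorem laurentTrinomial_quadratic_ne_zero
    {am1m1 am10 am11 a0m1 a00 a01 a1m1 a10 a11 : ℝ}
    (hsum : am1m1 + am10 + am11 + a0m1 + a00 + a01 + a1m1 + a10 + a11 = 0)
    (hpos : 0 ≤ am1m1 ∧ 0 ≤ am10 ∧ 0 ≤ am11 ∧ 0 ≤ a0m1 ∧ 0 ≤ a01 ∧
      0 ≤ a1m1 ∧ 0 ≤ a10 ∧ 0 ≤ a11)
    (hi : 0 < am10 ∨ 0 < a10)
    (hii : am1m1 ≠ 0 ∨ am11 ≠ 0 ∨ a0m1 ≠ 0 ∨ a01 ≠ 0 ∨ a1m1 ≠ 0 ∨ a11 ≠ 0)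
    {z x : ℂ} (hz : ‖z‖ = 1) (hz1 : z ≠ 1) (hx : ‖x‖ = 1) :
    laurentTrinomial a1m1 a10 a11 z * x ^ 2 + laurentTrinomial a0m1 a00 a01 z * x +
      laurentTrinomial am1m1 am10 am11 z ≠ 0 := by
  intro hroot
  obtain rfl := eq_one_of_laurentTrinomial_quadratic_eq_zero hsum hpos hi hz hx hroot
  have hre := congrArg Complex.re hroot
  simp only [one_pow, mul_one, Complex.add_re, re_laurentTrinomial hz, Complex.zero_re] at hre
  have hzre : z.re < 1 := (hz ▸ Complex.re_le_norm z).lt_of_ne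
    fun h => hz1 (Complex.eq_one_of_norm_eq_one_of_re_eq_one hz h)
  obtain ⟨hm1m1, -, hm11, h0m1, h01, h1m1, -, h11⟩ := hpos
  have hcoef : 0 < am1m1 + am11 + a0m1 + a01 + a1m1 + a11 := by
    by_contra! hle
    rcases hii with h | h | h | h | h | h <;> exact h (by linarith)
  nlinarith [mul_pos hcoef (sub_pos.2 hzre)]

theorem stmt17_general
    (am1m1 am10 am11 a0m1 a00 a01 a1m1 a10 a11 : ℝ)
    (hsum : am1m1 + am10 + am11 + a0m1 + a00 + a01 + a1m1 + a10 + a11 = 0)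
    (hpos : 0 ≤ am1m1 ∧ 0 ≤ am10 ∧ 0 ≤ am11 ∧ 0 ≤ a0m1 ∧ 0 ≤ a01 ∧
      0 ≤ a1m1 ∧ 0 ≤ a10 ∧ 0 ≤ a11)
    (hi : 0 < am10 ∨ 0 < a10)
    (hii : am1m1 ≠ 0 ∨ am11 ≠ 0 ∨ a0m1 ≠ 0 ∨ a01 ≠ 0 ∨ a1m1 ≠ 0 ∨ a11 ≠ 0)
    (z : ℂ) (hz : ‖z‖ = 1) (hz1 : z ≠ 1) :
    let am1z : ℂ := (am1m1 : ℂ) * z⁻¹ + (am10 : ℂ) + (am11 : ℂ) * z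
    let a0z : ℂ := (a0m1 : ℂ) * z⁻¹ + (a00 : ℂ) + (a01 : ℂ) * z
    let a1z : ℂ := (a1m1 : ℂ) * z⁻¹ + (a10 : ℂ) + (a11 : ℂ) * z
    let p : ℂ[X] := C a1z * X ^ 2 + C a0z * X + C am1z
    (∀ x : ℂ, p.IsRoot x → ‖x‖ ≠ 1) ∧
    Multiset.card (p.roots.filter fun x => ‖x‖ < 1) = 1 ∧
    (∀ x ∈ p.roots.filter fun x => ¬ ‖x‖ < 1, 1 < ‖x‖) := by
  intro am1z a0z a1z p
  have hcirc : ∀ x : ℂ, p.IsRoot x → ‖x‖ ≠ 1 := fun x hroot hx =>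
    laurentTrinomial_quadratic_ne_zero hsum hpos hi hii hz hz1 hx
      (by simpa [p] using hroot : a1z * x ^ 2 + a0z * x + am1z = 0)
  obtain ⟨hm1m1, hm10, hm11, h0m1, h01, h1m1, h10, h11⟩ := hpos
  have hdom : ‖a1z‖ + ‖am1z‖ ≤ ‖a0z‖ := calc
    ‖a1z‖ + ‖am1z‖ ≤ (a1m1 + a10 + a11) + (am1m1 + am10 + am11) :=
      add_le_add (norm_laurentTrinomial_le h1m1 h10 h11 hz)
        (norm_laurentTrinomial_le hm1m1 hm10 hm11 hz)
    _ ≤ -(a00 + (a0m1 + a01) * z.re) := by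
      nlinarith [hz ▸ Complex.re_le_norm z]
    _ = -a0z.re := by rw [← re_laurentTrinomial hz]; rfl
    _ ≤ ‖a0z‖ := (neg_le_abs _).trans (Complex.abs_re_le_norm _)
  refine ⟨hcirc, card_roots_filter_norm_lt_one_of_norm_add_le hdom hcirc, fun x hx => ?_⟩
  rw [Multiset.mem_filter] at hx
  exact (not_lt.1 hx.2).lt_of_ne (hcirc x (isRoot_of_mem_roots hx.1)).symm

/-- Theorem on the roots of `p_z(x) = a₁(z)x² + a₀(z)x + a₋₁(z)` where
`aᵢ(z) = a_{i,-1}z⁻¹ + a_{i,0} + a_{i,1}z`: under the sign and irreducibility conditions,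
for every `z` on the unit circle with `z ≠ 1`, `p_z` has no root of modulus 1 and exactly
one root (with multiplicity) of modulus less than 1; every other root has modulus
greater than 1 (a "root at infinity" occurring when `a₁(z) = 0`). -/
theorem stmt17
    (am1m1 am10 am11 a0m1 a00 a01 a1m1 a10 a11 : ℝ)
    (hsum : am1m1 + am10 + am11 + a0m1 + a00 + a01 + a1m1 + a10 + a11 = 0)
    (h00 : a00 < 0)
    (hpos : 0 ≤ am1m1 ∧ 0 ≤ am10 ∧ 0 ≤ am11 ∧ 0 ≤ a0m1 ∧ 0 ≤ a01 ∧
      0 ≤ a1m1 ∧ 0 ≤ a10 ∧ 0 ≤ a11)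
    (hi : 0 < am10 ∨ 0 < a10)
    (hii : am1m1 ≠ 0 ∨ am11 ≠ 0 ∨ a0m1 ≠ 0 ∨ a01 ≠ 0 ∨ a1m1 ≠ 0 ∨ a11 ≠ 0)
    (z : ℂ) (hz : ‖z‖ = 1) (hz1 : z ≠ 1) :
    let am1z : ℂ := (am1m1 : ℂ) * z⁻¹ + (am10 : ℂ) + (am11 : ℂ) * z
    let a0z : ℂ := (a0m1 : ℂ) * z⁻¹ + (a00 : ℂ) + (a01 : ℂ) * z
    let a1z : ℂ := (a1m1 : ℂ) * z⁻¹ + (a10 : ℂ) + (a11 : ℂ) * z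
    let p : ℂ[X] := C a1z * X ^ 2 + C a0z * X + C am1z
    (∀ x : ℂ, p.IsRoot x → ‖x‖ ≠ 1) ∧
    Multiset.card (p.roots.filter fun x => ‖x‖ < 1) = 1 ∧
    (∀ x ∈ p.roots.filter fun x => ¬ ‖x‖ < 1, 1 < ‖x‖) :=
  stmt17_general am1m1 am10 am11 a0m1 a00 a01 a1m1 a10 a11 hsum hpos hi hii z hz hz1

end
end
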